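/- arXiv:1606.03860 — 3 statements merged into one kernel-verified Lean document; each statement's English description precedes it below -/
import Mathlib

section
/- Fix real numbers a > 1 and b > 1, and for each L ∈ ℝ let w(L) ∈ (0, 1) be the unique solution of (a−1)/w − (b−1)/(1−w) + L = 0. Then L·w(L) → −(a−1) as L → −∞. -/
/-!
Multiplying the first-order condition by `w` gives the identity
`L * w = (b - 1) * w / (1 - w) - (a - 1)`. Its right-hand side is at least `-(a - 1)`, so
`0 < w(L) ≤ (a - 1) / (-L)` for `L < 0`, whence `w(L) → 0`; feeding this back into the
identity gives `L * w(L) → -(a - 1)`.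
-/

open Filter Topology

lemma mul_eq_of_beta_stationary {a b L w : ℝ} (hw₀ : w ≠ 0) (hw₁ : w ≠ 1)
    (h : (a - 1) / w - (b - 1) / (1 - w) + L = 0) :
    L * w = (b - 1) * (w / (1 - w)) - (a - 1) := by
  have : 1 - w ≠ 0 := sub_ne_zero.mpr hw₁.symm
  field_simp at h ⊢
  linarith

lemma neg_mul_le_of_beta_stationary {a b L w : ℝ} (hb : 1 ≤ b) (hw : w ∈ Set.Ioo (0 : ℝ) 1)
    (h : (a - 1) / w - (b - 1) / (1 - w) + L = 0) :
    -L * w ≤ a - 1 := by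
  have hid := mul_eq_of_beta_stationary hw.1.ne' hw.2.ne h
  have : 0 ≤ (b - 1) * (w / (1 - w)) :=
    mul_nonneg (sub_nonneg.mpr hb) (div_nonneg hw.1.le (sub_nonneg.mpr hw.2.le))
  linarith

lemma tendsto_zero_atBot_of_beta_stationary {a b : ℝ} (hb : 1 ≤ b) {w : ℝ → ℝ}
    (hmem : ∀ L, w L ∈ Set.Ioo (0 : ℝ) 1)
    (hsol : ∀ L, (a - 1) / w L - (b - 1) / (1 - w L) + L = 0) :
    Tendsto w atBot (𝓝 0) := by
  have hbound : ∀ᶠ L in atBot, w L ≤ (a - 1) / (-L) := by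
    filter_upwards [eventually_lt_atBot 0] with L hL
    rw [le_div_iff₀ (neg_pos.mpr hL), mul_comm]
    exact neg_mul_le_of_beta_stationary hb (hmem L) (hsol L)
  exact squeeze_zero' (Eventually.of_forall fun L => (hmem L).1.le) hbound
    (tendsto_const_nhds.div_atTop tendsto_neg_atBot_atTop)

theorem stmt_6_general (a b : ℝ) (hb : 1 < b) (w : ℝ → ℝ)
    (hmem : ∀ L, w L ∈ Set.Ioo (0 : ℝ) 1)
    (hsol : ∀ L, (a - 1) / w L - (b - 1) / (1 - w L) + L = 0) :
    Filter.Tendsto (fun L => L * w L) Filter.atBot (nhds (-(a - 1))) := by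
  have hw := tendsto_zero_atBot_of_beta_stationary hb.le hmem hsol
  have hlim : Tendsto (fun L => (b - 1) * (w L / (1 - w L)) - (a - 1)) atBot
      (𝓝 ((b - 1) * (0 / (1 - 0)) - (a - 1))) :=
    ((hw.div (tendsto_const_nhds.sub hw) (by norm_num)).const_mul _).sub_const _
  rw [zero_div, mul_zero, zero_sub] at hlim
  exact hlim.congr fun L =>
    (mul_eq_of_beta_stationary (hmem L).1.ne' (hmem L).2.ne (hsol L)).symm

theorem stmt_6 (a b : ℝ) (ha : 1 < a) (hb : 1 < b) (w : ℝ → ℝ)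
    (hmem : ∀ L, w L ∈ Set.Ioo (0 : ℝ) 1)
    (hsol : ∀ L, (a - 1) / w L - (b - 1) / (1 - w L) + L = 0)
    (huniq : ∀ L, ∀ v ∈ Set.Ioo (0 : ℝ) 1,
      (a - 1) / v - (b - 1) / (1 - v) + L = 0 → v = w L) :
    Filter.Tendsto (fun L => L * w L) Filter.atBot (nhds (-(a - 1))) :=
  stmt_6_general a b hb w hmem hsol
end

section
/- Let w : ℝ → ℝ satisfy w(a) → 0 as a → −∞ and a·w(a) → c for some finite c ∈ ℝ as a → −∞. Let f : ℝ → ℝ and s : ℝ → ℝ, and suppose there is a constant C > 0 with s(z)² ≤ C·(1 + |f(z)|) for all z ∈ ℝ. Then for every ε > 0 there exists M > 0 such that whenever f(z) ≤ −M, one has |w(f(z))·s(z)| ≤ ε; that is, w(f(z))·s(z) → 0 along any sequence z_k with f(z_k) → −∞. -/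
theorem stmt_9 (w f s : ℝ → ℝ) (c : ℝ)
    (hw0 : Filter.Tendsto w Filter.atBot (nhds 0))
    (hwc : Filter.Tendsto (fun a : ℝ => a * w a) Filter.atBot (nhds c))
    (C : ℝ) (hC : 0 < C) (hs : ∀ z : ℝ, s z ^ 2 ≤ C * (1 + |f z|)) :
    ∀ ε > 0, ∃ M > 0, ∀ z : ℝ, f z ≤ -M → |w (f z) * s z| ≤ ε := by
  intro ε hε
  -- from hwc get N1 with |a * w a - c| < 1 for a ≤ N1
  have h1 : ∀ᶠ a in Filter.atBot, dist (a * w a) c < 1 :=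
    (Metric.tendsto_nhds.mp hwc) 1 one_pos
  obtain ⟨N1, hN1⟩ := Filter.eventually_atBot.mp h1
  set K : ℝ := |c| + 1 with hK
  have hKpos : 0 < K := by positivity
  set M : ℝ := max 1 (max (-N1) (2 * C * K ^ 2 / ε ^ 2)) with hM
  have hM1 : (1 : ℝ) ≤ M := le_max_left _ _
  refine ⟨M, by linarith, fun z hz => ?_⟩
  set a : ℝ := f z with ha
  have haM : a ≤ -M := hz
  have ha1 : a ≤ -1 := le_trans haM (by linarith)
  have haN1 : a ≤ N1 := le_trans haM (by
    have : -N1 ≤ M := le_trans (le_max_left _ _) (le_max_right _ _)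
    linarith)
  have haD : -a ≥ 2 * C * K ^ 2 / ε ^ 2 := by
    have : 2 * C * K ^ 2 / ε ^ 2 ≤ M := le_trans (le_max_right _ _) (le_max_right _ _)
    linarith
  have hdist := hN1 a haN1
  rw [Real.dist_eq] at hdist
  have hbound : |a * w a| ≤ K := by
    have := abs_sub_abs_le_abs_sub (a * w a) c
    linarith
  have hsq : (a * w a) ^ 2 ≤ K ^ 2 := by
    have := sq_abs (a * w a)
    nlinarith [abs_nonneg (a * w a)]
  have habs : |a| = -a := abs_of_neg (by linarith)
  have hsz : s z ^ 2 ≤ C * (1 - a) := by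
    have := hs z
    rw [← ha, habs] at this
    linarith
  have hεD : (-a) * ε ^ 2 ≥ 2 * C * K ^ 2 := by
    rw [ge_iff_le, ← div_le_iff₀ (by positivity : (0:ℝ) < ε ^ 2)]
    exact haD
  have hpos : 0 < -a := by linarith
  have h2 : (w a) ^ 2 * s z ^ 2 ≤ (w a) ^ 2 * (C * (-2 * a)) := by
    have h3 : C * (1 - a) ≤ C * (-2 * a) := by nlinarith
    have := mul_le_mul_of_nonneg_left hsz (sq_nonneg (w a))
    nlinarith [sq_nonneg (w a)]
  have h5 : (w a) ^ 2 * (C * (-2 * a)) * (-a) ≤ ε ^ 2 * (-a) := by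
    have heq : (w a) ^ 2 * (C * (-2 * a)) * (-a) = 2 * C * (a * w a) ^ 2 := by ring
    nlinarith
  have h6 : (w a) ^ 2 * (C * (-2 * a)) ≤ ε ^ 2 :=
    le_of_mul_le_mul_right h5 hpos
  have key : (w a * s z) ^ 2 ≤ ε ^ 2 := by nlinarith
  nlinarith [abs_nonneg (w a * s z), sq_abs (w a * s z)]
end

section
/- Fix β₀ ∈ ℝ, σ > 0, a > 1 and b > −(1/2)·log(2πσ²). Let ℓ(z) = exp(−(z−β₀)²/(2σ²))/√(2πσ²) be the Gaussian likelihood at the true parameter, s(z) = (z−β₀)/σ² its score, and w(L) = (a−1)/(b−L) the Gamma-induced weight function (well defined since log ℓ(z) ≤ −(1/2)log(2πσ²) < b for all z). Then w(log ℓ(z))·s(z) → 0 as |z| → ∞; equivalently, the product tends to 0 as ℓ(z) → 0. -/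
/-!
The Gaussian log-likelihood is a quadratic polynomial in `z`, so the weight `w(log ℓ(z))` decays
like `1 / z²` while the score grows only like `z`.
-/

open Real Filter Topology Bornology

theorem log_exp_div_sqrt (u : ℝ) {S : ℝ} (hS : 0 < S) :
    log (exp u / √S) = u - log S / 2 := by
  rw [log_div (exp_ne_zero u) (sqrt_ne_zero'.2 hS), log_exp, log_sqrt hS.le]

theorem tendsto_div_const_add_mul_sq_cobounded (c : ℝ) {k : ℝ} (hk : k ≠ 0) :
    Tendsto (fun x : ℝ => x / (c + k * x ^ 2)) (cobounded ℝ) (𝓝 0) := by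
  -- Substituting `y = x⁻¹` turns the limit at infinity into continuity at `0`.
  have hcont : ContinuousAt (fun y : ℝ => y / (c * y ^ 2 + k)) 0 :=
    continuousAt_id.div (by fun_prop) (by simpa using hk)
  have hlim := hcont.tendsto.comp tendsto_inv₀_cobounded
  rw [zero_div] at hlim
  refine hlim.congr fun x => ?_
  rcases eq_or_ne x 0 with rfl | hx
  · simp
  · have hden : c * x⁻¹ ^ 2 + k = (c + k * x ^ 2) / x ^ 2 := by field_simp
    simp only [Function.comp_apply, hden, div_div_eq_mul_div]
    field_simp

theorem stmt_10_general (β₀ σ a b : ℝ) (hσ : 0 < σ) :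
    Filter.Tendsto
      (fun z : ℝ =>
        (a - 1) /
            (b - Real.log (Real.exp (-(z - β₀) ^ 2 / (2 * σ ^ 2)) /
              Real.sqrt (2 * Real.pi * σ ^ 2))) *
          ((z - β₀) / σ ^ 2))
      (Filter.cocompact ℝ) (nhds 0) := by
  have hk : (2 * σ ^ 2)⁻¹ ≠ 0 := by positivity
  have hlim := ((tendsto_div_const_add_mul_sq_cobounded (b + log (2 * π * σ ^ 2) / 2) hk).comp
    (tendsto_sub_const_cobounded β₀)).const_mul ((a - 1) / σ ^ 2)
  rw [mul_zero, Metric.cobounded_eq_cocompact] at hlim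
  refine hlim.congr fun z => ?_
  rw [Function.comp_apply, log_exp_div_sqrt _ (by positivity)]
  field_simp
  ring

theorem stmt_10 (β₀ σ a b : ℝ) (hσ : 0 < σ) (ha : 1 < a)
    (hb : -(1 / 2) * Real.log (2 * Real.pi * σ ^ 2) < b) :
    Filter.Tendsto
      (fun z : ℝ =>
        (a - 1) /
            (b - Real.log (Real.exp (-(z - β₀) ^ 2 / (2 * σ ^ 2)) /
              Real.sqrt (2 * Real.pi * σ ^ 2))) *
          ((z - β₀) / σ ^ 2))
      (Filter.cocompact ℝ) (nhds 0) :=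
  stmt_10_general β₀ σ a b hσ
end
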